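/- For every even integer g ≥ 2 and every odd integer n with n ≥ max(2g−1, g+3), there exists an OF(n,g). -/

import Mathlib

/-- The weight of a word of length `m` over `ℤ_q` (represented as `Fin q`):
the number of nonzero coordinates. -/
def wordWeight {m q : ℕ} (x : Fin m → Fin q) : ℕ :=
  (Finset.univ.filter (fun i => (x i : ℕ) ≠ 0)).card

/-- The set `H(m)` of all words of length `m` and weight `2` over `ℤ_{g+1}`. -/
def weightTwoWords (m g : ℕ) : Finset (Fin m → Fin (g + 1)) :=
  Finset.univ.filter (fun x => wordWeight x = 2)

/-- A partition of `H(m)` (words of length `m`, weight `2` over `ℤ_{g+1}`) into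
`k` subsets, each of cardinality `s`, with pairwise Hamming distance at least
`3` inside each subset. -/
def HasDist3Partition (m g k s : ℕ) : Prop :=
  ∃ P : Fin k → Finset (Fin m → Fin (g + 1)),
    (∀ i j, i ≠ j → Disjoint (P i) (P j)) ∧
    (Finset.univ.biUnion P = weightTwoWords m g) ∧
    (∀ i, (P i).card = s) ∧
    (∀ i, ∀ x ∈ P i, ∀ y ∈ P i, x ≠ y → 3 ≤ hammingDist x y)

/-- An `ODAR(m,g)`: a partition of `H(m)` into `g²` subsets, each of
cardinality `C(m,2)` and with pairwise Hamming distance at least 3. -/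
def IsODAR (m g : ℕ) : Prop :=
  HasDist3Partition m g (g ^ 2) (m.choose 2)

/-- An `OF(m,g)`: a partition of `H(m)` into `g(m-1)` subsets, each of
cardinality `g·m/2` and with pairwise Hamming distance at least 3. -/
def IsOF (m g : ℕ) : Prop :=
  HasDist3Partition m g (g * (m - 1)) (g * m / 2)

/-!
Write `n = 2M + 1`, `g = 2h` and view the parts as `ℤ/n`. A one-factor of `K_{n×g}` that joins
each pair of parts at most once is a `g`-regular graph on the parts together with, at each part `u`
and each neighbour `v`, the point of `u` on the edge towards `v`, injective in `v`. For the graphs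
take `4h` copies of each circulant graph with jumps `±(1 + (m + i mod M))`, `i < h`, `m ∈ ℤ/M`:
these are `4hM = g(n - 1)` graphs, each `2h`-regular, and every pair of parts lies in exactly
`4h · h = g²` of them. The points are chosen one part at a time. At part `v` the pairs
(colour, neighbour `w`) form a `g`-regular bipartite multigraph between the colours and the blocks
of colours sharing one point at `w` (or one cell of a balanced partition, if `w` comes later), and
König's edge-colouring theorem chooses the points at `v`. The `g²` colours through a pair of parts
then carry `g²` distinct pairs of points, so every edge of `K_{n×g}` lies in exactly one factor.
-/

open Finset

section Konig

variable {α L R : Type*} [DecidableEq L] [DecidableEq R]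
  {k : ℕ} {E : Finset α} {l : α → L} {r : α → R}

lemma card_filter_mem_le (hl : ∀ x ∈ E, #{y ∈ E | l y = l x} = k) (T : Finset L) :
    #{x ∈ E | l x ∈ T} ≤ k * #T := by
  refine card_le_mul_card_image_of_maps_to (fun x hx => (mem_filter.mp hx).2) k fun a _ => ?_
  rcases Finset.eq_empty_or_nonempty {y ∈ {x ∈ E | l x ∈ T} | l y = a} with hempty | ⟨x, hx⟩
  · simp [hempty]
  · simp only [filter_filter, mem_filter] at hx
    rw [← hl x hx.1, hx.2.2]
    exact card_le_card fun y hy => by simp_all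

lemma card_filter_mem_eq (hl : ∀ x ∈ E, #{y ∈ E | l y = l x} = k) {T : Finset L}
    (hT : T ⊆ E.image l) : #{x ∈ E | l x ∈ T} = k * #T := by
  rw [card_eq_sum_card_fiberwise (s := {x ∈ E | l x ∈ T}) fun x hx => (mem_filter.mp hx).2,
    sum_const_nat fun a ha => ?_, mul_comm]
  obtain ⟨x, hx, rfl⟩ := mem_image.mp (hT ha)
  rw [← hl x hx, filter_filter]
  congr 1 with y
  grind

lemma card_eq_mul_card_image (hl : ∀ x ∈ E, #{y ∈ E | l y = l x} = k) :
    #E = k * #(E.image l) := by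
  rw [← card_filter_mem_eq hl subset_rfl, filter_true_of_mem fun x => mem_image_of_mem l]

lemma exists_injective_of_regular (hk : 0 < k) (hl : ∀ x ∈ E, #{y ∈ E | l y = l x} = k)
    (hr : ∀ x ∈ E, #{y ∈ E | r y = r x} = k) :
    ∃ f : E.image l → R, Function.Injective f ∧
      ∀ a : E.image l, ∃ x ∈ E, l x = a ∧ r x = f a := by
  let t : E.image l → Finset R := fun a => {x ∈ E | l x = a}.image r
  have hall : ∀ s : Finset (E.image l), #s ≤ #(s.biUnion t) := by
    intro s
    have hsub : {x ∈ E | l x ∈ s.map (Function.Embedding.subtype _)} ⊆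
        {x ∈ E | r x ∈ s.biUnion t} := by
      intro x hx
      simp only [mem_filter, mem_map, Function.Embedding.subtype_apply] at hx
      obtain ⟨hxE, a, has, hax⟩ := hx
      simp only [mem_filter, mem_biUnion, t, mem_image]
      exact ⟨hxE, a, has, x, ⟨hxE, hax.symm⟩, rfl⟩
    have hs : s.map (Function.Embedding.subtype _) ⊆ E.image l := fun a ha => by
      obtain ⟨b, -, rfl⟩ := mem_map.mp ha
      exact b.2
    have := (card_le_card hsub).trans (card_filter_mem_le hr _)
    rw [card_filter_mem_eq hl hs, card_map] at this
    exact Nat.le_of_mul_le_mul_left this hk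
  obtain ⟨f, hf_inj, hft⟩ := (all_card_le_biUnion_card_iff_exists_injective t).mp hall
  refine ⟨f, hf_inj, fun a => ?_⟩
  obtain ⟨x, hx, hxr⟩ := mem_image.mp (hft a)
  exact ⟨x, (mem_filter.mp hx).1, (mem_filter.mp hx).2, hxr⟩

lemma exists_perfectMatching_of_regular (hk : 0 < k)
    (hl : ∀ x ∈ E, #{y ∈ E | l y = l x} = k) (hr : ∀ x ∈ E, #{y ∈ E | r y = r x} = k) :
    ∃ S ⊆ E, (∀ x ∈ E, #{y ∈ S | l y = l x} = 1) ∧ (∀ x ∈ E, #{y ∈ S | r y = r x} = 1) := by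
  classical
  obtain ⟨f, hf_inj, hpick⟩ := exists_injective_of_regular hk hl hr
  choose pick hpickE hpickl hpickr using hpick
  have himage : (E.image l).attach.image f = E.image r := by
    refine eq_of_subset_of_card_le (fun b hb => ?_) ?_
    · obtain ⟨a, -, rfl⟩ := mem_image.mp hb
      rw [← hpickr]
      exact mem_image_of_mem r (hpickE a)
    · rw [card_image_of_injective _ hf_inj, card_attach]
      exact (Nat.eq_of_mul_eq_mul_left hk
        ((card_eq_mul_card_image hl).symm.trans (card_eq_mul_card_image hr))).ge
  refine ⟨(E.image l).attach.image pick, fun x hx => ?_, fun x hx => ?_, fun x hx => ?_⟩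
  · obtain ⟨a, -, rfl⟩ := mem_image.mp hx
    exact hpickE a
  · refine card_eq_one.mpr ⟨pick ⟨l x, mem_image_of_mem l hx⟩, ?_⟩
    ext y
    simp only [mem_filter, mem_image, mem_attach, true_and, mem_singleton]
    constructor
    · rintro ⟨⟨a, rfl⟩, hy⟩
      congr
      exact Subtype.ext (hpickl a ▸ hy)
    · rintro rfl
      exact ⟨⟨_, rfl⟩, hpickl _⟩
  · obtain ⟨a, -, ha⟩ := mem_image.mp (himage ▸ mem_image_of_mem r hx)
    refine card_eq_one.mpr ⟨pick a, ?_⟩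
    ext y
    simp only [mem_filter, mem_image, mem_attach, true_and, mem_singleton]
    constructor
    · rintro ⟨⟨a', rfl⟩, hy⟩
      rw [hf_inj ((hpickr a').symm.trans (hy.trans ha.symm))]
    · rintro rfl
      exact ⟨⟨_, rfl⟩, (hpickr a).trans ha⟩

lemma injOn_of_card_filter_eq_one {K : Type*} [DecidableEq K] {S : Finset α} {key : α → K}
    (hS : ∀ x ∈ E, #{y ∈ S | key y = key x} = 1) (hSE : S ⊆ E) : Set.InjOn key S := by
  intro x hx y hy hxy
  exact card_le_one.mp (hS x (hSE hx)).le x (by simp_all) y (by simp_all)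

lemma injOn_prod_piecewise_last [DecidableEq α] {K : Type*} {S : Finset α} {key : α → K}
    {φ : α → Fin k} (hS : Set.InjOn key S) (hφ : Set.InjOn (fun x => (key x, φ x)) ↑(E \ S)) :
    Set.InjOn (fun x => (key x, if x ∈ S then Fin.last k else (φ x).castSucc)) E := by
  intro x hx y hy hxy
  simp only [Prod.mk.injEq] at hxy
  obtain ⟨hkey, hval⟩ := hxy
  by_cases hxS : x ∈ S <;> by_cases hyS : y ∈ S <;> simp only [hxS, hyS, if_true, if_false] at hval
  · exact hS hxS hyS hkey
  · exact absurd hval.symm (Fin.castSucc_ne_last _)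
  · exact absurd hval (Fin.castSucc_ne_last _)
  · exact hφ (by simp_all) (by simp_all) (Prod.ext hkey (Fin.castSucc_injective _ hval))

lemma card_filter_sdiff_eq_pred {K : Type*} [DecidableEq α] [DecidableEq K] {S : Finset α}
    {key : α → K} (hSE : S ⊆ E) (hE : ∀ x ∈ E, #{y ∈ E | key y = key x} = k + 1)
    (hS : ∀ x ∈ E, #{y ∈ S | key y = key x} = 1) :
    ∀ x ∈ E \ S, #{y ∈ E \ S | key y = key x} = k := by
  intro x hx
  have hx := (mem_sdiff.mp hx).1
  have hsplit : {y ∈ E \ S | key y = key x} =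
      {y ∈ E | key y = key x} \ {y ∈ S | key y = key x} := by
    ext
    simp only [mem_filter, mem_sdiff]
    tauto
  rw [hsplit, card_sdiff_of_subset (filter_subset_filter _ hSE), hE x hx, hS x hx]
  rfl

/-- König's edge-colouring theorem for `k`-regular bipartite multigraphs, the edge `x ∈ E`
joining `l x` to `r x`. -/
theorem exists_edgeColoring_of_regular [DecidableEq α] (hk : 0 < k)
    (hl : ∀ x ∈ E, #{y ∈ E | l y = l x} = k) (hr : ∀ x ∈ E, #{y ∈ E | r y = r x} = k) :
    ∃ φ : α → Fin k, Set.InjOn (fun x => (l x, φ x)) E ∧ Set.InjOn (fun x => (r x, φ x)) E := by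
  induction k, hk using Nat.le_induction generalizing E with
  | base =>
    refine ⟨fun _ => 0, fun x hx y hy hxy => ?_, fun x hx y hy hxy => ?_⟩
    · exact injOn_of_card_filter_eq_one hl subset_rfl hx hy (congrArg Prod.fst hxy)
    · exact injOn_of_card_filter_eq_one hr subset_rfl hx hy (congrArg Prod.fst hxy)
  | succ k hk ih =>
    obtain ⟨S, hSE, hSl, hSr⟩ := exists_perfectMatching_of_regular k.succ_pos hl hr
    obtain ⟨φ, hφl, hφr⟩ := ih (card_filter_sdiff_eq_pred hSE hl hSl)
      (card_filter_sdiff_eq_pred hSE hr hSr)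
    exact ⟨fun x => if x ∈ S then Fin.last k else (φ x).castSucc,
      injOn_prod_piecewise_last (injOn_of_card_filter_eq_one hSl hSE) hφl,
      injOn_prod_piecewise_last (injOn_of_card_filter_eq_one hSr hSE) hφr⟩

end Konig

lemma card_filter_eq_of_forall_le {α β : Type*} [Fintype β] [DecidableEq β] {s : Finset α}
    {f : α → β} {n : ℕ} (hle : ∀ b, #{x ∈ s | f x = b} ≤ n) (hs : #s = Fintype.card β * n)
    (b : β) : #{x ∈ s | f x = b} = n := by
  have hsum : ∑ b, #{x ∈ s | f x = b} = ∑ _b : β, n := by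
    rw [← card_eq_sum_card_fiberwise fun x _ => mem_univ (f x), hs, sum_const, card_univ,
      smul_eq_mul]
  exact (sum_eq_sum_iff_of_le fun b _ => hle b).mp hsum b (mem_univ b)

lemma exists_fiber_card_eq {α : Type*} {k : ℕ} [NeZero k] (s : Finset α) (hs : #s = k * k) :
    ∃ f : α → Fin k, ∀ b, #{x ∈ s | f x = b} = k := by
  classical
  let e : s ≃ Fin k × Fin k := (s.equivFinOfCardEq hs).trans finProdFinEquiv.symm
  refine ⟨fun x => if hx : x ∈ s then (e ⟨x, hx⟩).1 else 0, fun b => ?_⟩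
  refine Eq.trans (card_nbij' (t := univ) (fun x => if hx : x ∈ s then (e ⟨x, hx⟩).2 else 0)
    (fun j => e.symm (b, j)) ?_ ?_ ?_ ?_) (card_fin k)
  · intro x _
    simp
  · intro j _
    simp
  · intro x hx
    simp only [coe_filter, Set.mem_ofPred_eq] at hx
    obtain ⟨hxs, rfl⟩ := hx
    simp [hxs]
  · intro j _
    simp

section Labeling

variable {V C : Type*} {k : ℕ}

/-- Read `G c` as the quotient, on the parts `V`, of a one-factor `c` of the complete multipartite
graph with parts `V × Fin k`: `A c u v` is the point of part `u` on its edge towards part `v`. -/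
structure IsProperLabeling (G : C → SimpleGraph V) (A : C → V → V → Fin k) : Prop where
  injOn_neighborSet : ∀ c u, Set.InjOn (A c u) ((G c).neighborSet u)
  injOn_adj : ∀ u v, Set.InjOn (fun c => (A c u v, A c v u)) {c | (G c).Adj u v}

/-- A labeling built at the parts of `P`. The balance condition `card_label` is what makes the
next part amenable to König's theorem. -/
structure IsPartialLabeling [Fintype C] (G : C → SimpleGraph V) [∀ c, DecidableRel (G c).Adj]
    (P : Finset V) (A : C → V → V → Fin k) : Prop where
  injOn_neighborSet : ∀ u ∈ P, ∀ c, Set.InjOn (A c u) ((G c).neighborSet u)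
  card_label : ∀ u ∈ P, ∀ v ∉ P, ∀ b, #{c | (G c).Adj u v ∧ A c u v = b} = k
  injOn_adj : ∀ u ∈ P, ∀ v ∈ P, Set.InjOn (fun c => (A c u v, A c v u)) {c | (G c).Adj u v}

variable [DecidableEq V] [Fintype C] {G : C → SimpleGraph V} [∀ c, DecidableRel (G c).Adj]

lemma IsPartialLabeling.extend (hpair : ∀ u v, u ≠ v → #{c | (G c).Adj u v} = k * k)
    {P : Finset V} {A : C → V → V → Fin k} (hA : IsPartialLabeling G P A) {v : V} (hv : v ∉ P)
    {ρ : V → C → Fin k} (hρ : ∀ w ∈ P, ∀ c, ρ w c = A c w v) {φ : C → V → Fin k}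
    (hφ_nbr : ∀ c, Set.InjOn (φ c) ((G c).neighborSet v))
    (hφ : ∀ w, Set.InjOn (fun c => (ρ w c, φ c w)) {c | (G c).Adj v w}) :
    IsPartialLabeling G (insert v P) (fun c u w => if u = v then φ c w else A c u w) := by
  refine ⟨fun u hu c => ?_, fun u hu w hw b => ?_, fun u hu w hw => ?_⟩
  · rcases mem_insert.mp hu with rfl | hu
    · simpa only [if_true] using hφ_nbr c
    · simpa only [ne_of_mem_of_not_mem hu hv, if_false] using hA.injOn_neighborSet u hu c
  · rw [mem_insert, not_or] at hw
    rcases mem_insert.mp hu with rfl | hu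
    · have hle : ∀ b, #{c ∈ ({c | (G c).Adj u w} : Finset C) | φ c w = b} ≤ k := by
        intro b
        refine (card_le_card_of_injOn (ρ w) (t := univ) (fun _ _ => mem_univ _) ?_).trans
          (card_fin k).le
        intro c hc c' hc' h
        simp only [coe_filter, mem_filter, mem_univ, true_and, Set.mem_ofPred_eq] at hc hc'
        exact hφ w hc.1 hc'.1 (Prod.ext h (hc.2.trans hc'.2.symm))
      simpa only [if_true, filter_filter] using card_filter_eq_of_forall_le hle
        (by rw [Fintype.card_fin, hpair u w (Ne.symm hw.1)]) b
    · simpa only [ne_of_mem_of_not_mem hu hv, if_false] using hA.card_label u hu w hw.2 b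
  · have hφP : ∀ w ∈ P, Set.InjOn (fun c => (A c w v, φ c w)) {c | (G c).Adj v w} :=
      fun w hw => by simpa only [hρ w hw] using hφ w
    rcases mem_insert.mp hu with rfl | huP <;> rcases mem_insert.mp hw with rfl | hwP
    · intro c hc
      exact (hc.ne rfl).elim
    · intro c hc c' hc' h
      simp only [if_true, ne_of_mem_of_not_mem hwP hv, if_false, Prod.mk.injEq] at h
      exact hφP w hwP hc hc' (Prod.ext h.2 h.1)
    · intro c hc c' hc' h
      simp only [if_true, ne_of_mem_of_not_mem huP hv, if_false, Prod.mk.injEq] at h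
      exact hφP u huP hc.symm hc'.symm (Prod.ext h.1 h.2)
    · simpa only [ne_of_mem_of_not_mem huP hv, ne_of_mem_of_not_mem hwP hv, if_false]
        using hA.injOn_adj u huP w hwP

variable [Fintype V] [DecidableEq C]

/-- The edges `(c, w)` at `v` form a `k`-regular bipartite multigraph between the colours `c` and
the blocks `(w, ρ w c)`; König's theorem colours them. -/
lemma exists_labels_at (hreg : ∀ c, (G c).IsRegularOfDegree k) [NeZero k] (v : V)
    (ρ : V → C → Fin k) (hρ : ∀ w, w ≠ v → ∀ b, #{c | (G c).Adj v w ∧ ρ w c = b} = k) :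
    ∃ φ : C → V → Fin k, (∀ c, Set.InjOn (φ c) ((G c).neighborSet v)) ∧
      ∀ w, Set.InjOn (fun c => (ρ w c, φ c w)) {c | (G c).Adj v w} := by
  let E : Finset (C × V) := {x | (G x.1).Adj v x.2}
  have hmemE : ∀ {c w}, (G c).Adj v w → (c, w) ∈ E := fun h => mem_filter.mpr ⟨mem_univ _, h⟩
  have hl : ∀ x ∈ E, #{y ∈ E | y.1 = x.1} = k := by
    rintro ⟨c, w⟩ -
    have hfib : {y ∈ E | y.1 = c} =
        ((G c).neighborFinset v).map ⟨_, Prod.mk_right_injective c⟩ := by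
      ext ⟨c', w'⟩
      simp only [E, mem_filter, mem_univ, true_and, mem_map, SimpleGraph.mem_neighborFinset,
        Function.Embedding.coeFn_mk, Prod.mk.injEq]
      grind
    rw [hfib, card_map, SimpleGraph.card_neighborFinset_eq_degree, (hreg c).degree_eq]
  have hr : ∀ x ∈ E, #{y ∈ E | (y.2, ρ y.2 y.1) = (x.2, ρ x.2 x.1)} = k := by
    rintro ⟨c, w⟩ hx
    have hfib : {y ∈ E | (y.2, ρ y.2 y.1) = (w, ρ w c)} =
        ({c' | (G c').Adj v w ∧ ρ w c' = ρ w c} : Finset C).map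
          ⟨_, Prod.mk_left_injective w⟩ := by
      ext ⟨c', w'⟩
      simp only [E, mem_filter, mem_univ, true_and, mem_map, Function.Embedding.coeFn_mk,
        Prod.mk.injEq]
      grind
    rw [hfib, card_map, hρ w (mem_filter.mp hx).2.ne' (ρ w c)]
  obtain ⟨φ, hφl, hφr⟩ := exists_edgeColoring_of_regular (NeZero.pos k) hl hr
  refine ⟨fun c w => φ (c, w), fun c w hw w' hw' h => ?_, fun w c hc c' hc' h => ?_⟩
  · exact congrArg Prod.snd (hφl (hmemE hw) (hmemE hw') (Prod.ext rfl h))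
  · simp only [Prod.mk.injEq] at h
    exact congrArg Prod.fst (hφr (hmemE hc) (hmemE hc') (by simp [h]))

lemma IsPartialLabeling.exists_insert [NeZero k] (hreg : ∀ c, (G c).IsRegularOfDegree k)
    (hpair : ∀ u v, u ≠ v → #{c | (G c).Adj u v} = k * k) {P : Finset V}
    {A : C → V → V → Fin k} (hA : IsPartialLabeling G P A) {v : V} (hv : v ∉ P) :
    ∃ A' : C → V → V → Fin k, IsPartialLabeling G (insert v P) A' := by
  have hgrp : ∀ w, ∃ f : C → Fin k, w ≠ v → ∀ b, #{c | (G c).Adj v w ∧ f c = b} = k := by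
    intro w
    by_cases hw : w = v
    · exact ⟨fun _ => 0, fun h => (h hw).elim⟩
    · obtain ⟨f, hf⟩ := exists_fiber_card_eq _ (hpair v w (Ne.symm hw))
      exact ⟨f, fun _ b => by simpa only [filter_filter] using hf b⟩
  choose grp hgrp using hgrp
  let ρ : V → C → Fin k := fun w c => if w ∈ P then A c w v else grp w c
  have hρP : ∀ w ∈ P, ∀ c, ρ w c = A c w v := fun w hw c => if_pos hw
  obtain ⟨φ, hφ_nbr, hφ⟩ := exists_labels_at hreg v ρ fun w hwv b => by
    by_cases hw : w ∈ P
    · simpa only [ρ, hw, if_true, (G _).adj_comm] using hA.card_label w hw v hv b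
    · simpa only [ρ, hw, if_false] using hgrp w hwv b
  exact ⟨_, hA.extend hpair hv hρP hφ_nbr hφ⟩

theorem exists_isProperLabeling [NeZero k] (hreg : ∀ c, (G c).IsRegularOfDegree k)
    (hpair : ∀ u v, u ≠ v → #{c | (G c).Adj u v} = k * k) :
    ∃ A : C → V → V → Fin k, IsProperLabeling G A := by
  have hP : ∀ P : Finset V, ∃ A : C → V → V → Fin k, IsPartialLabeling G P A := by
    intro P
    induction P using Finset.induction_on with
    | empty => exact ⟨fun _ _ _ => 0, ⟨by simp, by simp, by simp⟩⟩
    | insert v P hv ih =>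
      obtain ⟨A, hA⟩ := ih
      exact hA.exists_insert hreg hpair hv
  obtain ⟨A, hA⟩ := hP univ
  exact ⟨A, ⟨fun c u => hA.injOn_neighborSet u (mem_univ u) c,
    fun u v => hA.injOn_adj u (mem_univ u) v (mem_univ v)⟩⟩

end Labeling

lemma three_le_hammingDist {ι β : Type*} [Fintype ι] [DecidableEq ι] [DecidableEq β]
    {x y : ι → β} {i j l : ι} (hij : i ≠ j) (hil : i ≠ l) (hjl : j ≠ l) (hi : x i ≠ y i)
    (hj : x j ≠ y j) (hl : x l ≠ y l) : 3 ≤ hammingDist x y := by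
  calc 3 = #{i, j, l} := (card_eq_three.mpr ⟨i, j, l, hij, hil, hjl, rfl⟩).symm
    _ ≤ hammingDist x y := card_le_card <| by
      intro z hz
      simp only [mem_insert, mem_singleton] at hz
      rcases hz with rfl | rfl | rfl <;> simpa

section Words

variable {m g : ℕ} {C : Type*}

/-- `Fin.succ` sends the points `Fin g` of a part to the nonzero symbols of `ℤ_{g+1}`. -/
def edgeWord (A : C → Fin m → Fin m → Fin g) (c : C) (u v : Fin m) : Fin m → Fin (g + 1) :=
  fun x => if x = u then (A c u v).succ else if x = v then (A c v u).succ else 0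

variable (A : C → Fin m → Fin m → Fin g) (c : C) {u v x : Fin m}

lemma edgeWord_comm (u v : Fin m) : edgeWord A c u v = edgeWord A c v u := by
  funext x
  unfold edgeWord
  split_ifs <;> subst_vars <;> rfl

lemma edgeWord_apply_left : edgeWord A c u v u = (A c u v).succ := if_pos rfl

lemma edgeWord_apply_right : edgeWord A c u v v = (A c v u).succ := by
  rw [edgeWord_comm, edgeWord_apply_left]

lemma edgeWord_apply_of_ne (hu : x ≠ u) (hv : x ≠ v) : edgeWord A c u v x = 0 := by
  simp [edgeWord, hu, hv]

lemma edgeWord_ne_zero_iff : edgeWord A c u v x ≠ 0 ↔ x = u ∨ x = v := by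
  unfold edgeWord
  split_ifs <;> simp_all [Fin.succ_ne_zero]

lemma wordWeight_edgeWord (huv : u ≠ v) : wordWeight (edgeWord A c u v) = 2 := by
  rw [wordWeight, ← card_pair huv]
  congr 1
  ext x
  simp [edgeWord_ne_zero_iff]

lemma sym2_eq_of_edgeWord_eq {C' : Type*} {A' : C' → Fin m → Fin m → Fin g} {c' : C'}
    {u' v' : Fin m} (h : edgeWord A c u v = edgeWord A' c' u' v') : s(u, v) = s(u', v') :=
  Sym2.ext fun x => by
    rw [Sym2.mem_iff, Sym2.mem_iff, ← edgeWord_ne_zero_iff A c, ← edgeWord_ne_zero_iff A' c', h]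

lemma label_eq_of_edgeWord_eq {c' : C} (h : edgeWord A c u v = edgeWord A c' u v) :
    A c u v = A c' u v ∧ A c v u = A c' v u := by
  have hu := congrFun h u
  have hv := congrFun h v
  rw [edgeWord_apply_left, edgeWord_apply_left, Fin.succ_inj] at hu
  rw [edgeWord_apply_right, edgeWord_apply_right, Fin.succ_inj] at hv
  exact ⟨hu, hv⟩

lemma eq_edgeWord_of_support {w : Fin m → Fin (g + 1)} (hw : ∀ x, w x ≠ 0 ↔ x = u ∨ x = v)
    (hu : w u = (A c u v).succ) (hv : w v = (A c v u).succ) : w = edgeWord A c u v := by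
  funext x
  by_cases hxu : x = u
  · rw [hxu, hu, edgeWord_apply_left]
  by_cases hxv : x = v
  · rw [hxv, hv, edgeWord_apply_right]
  rw [edgeWord_apply_of_ne A c hxu hxv]
  simpa [hxu, hxv] using hw x

lemma three_le_hammingDist_edgeWord_of_disjoint {u' v' : Fin m} (huv : u ≠ v) (hu : u ≠ u')
    (hu' : u ≠ v') (hv : v ≠ u') (hv' : v ≠ v') :
    3 ≤ hammingDist (edgeWord A c u v) (edgeWord A c u' v') := by
  refine three_le_hammingDist huv hu hv ?_ ?_ ?_
  · rw [edgeWord_apply_left, edgeWord_apply_of_ne A c hu hu']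
    exact Fin.succ_ne_zero _
  · rw [edgeWord_apply_right, edgeWord_apply_of_ne A c hv hv']
    exact Fin.succ_ne_zero _
  · rw [edgeWord_apply_left, edgeWord_apply_of_ne A c (Ne.symm hu) (Ne.symm hv)]
    exact (Fin.succ_ne_zero _).symm

end Words

section Factors

variable {m g : ℕ} {C : Type*} {G : C → SimpleGraph (Fin m)} {A : C → Fin m → Fin m → Fin g}

lemma IsProperLabeling.eq_of_edgeWord_eq (hA : IsProperLabeling G A) {c c' : C} {u v : Fin m}
    (hc : (G c).Adj u v) (hc' : (G c').Adj u v) (h : edgeWord A c u v = edgeWord A c' u v) :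
    c = c' :=
  hA.injOn_adj u v hc hc' (Prod.ext_iff.mpr (label_eq_of_edgeWord_eq A c h))

lemma IsProperLabeling.three_le_hammingDist_of_adj_of_adj (hA : IsProperLabeling G A) {c : C}
    {u v v' : Fin m} (hv : (G c).Adj u v) (hv' : (G c).Adj u v') (hvv' : v ≠ v') :
    3 ≤ hammingDist (edgeWord A c u v) (edgeWord A c u v') := by
  refine three_le_hammingDist hvv' hv.ne.symm hv'.ne.symm ?_ ?_ ?_
  · rw [edgeWord_apply_right, edgeWord_apply_of_ne A c hv.ne.symm hvv']
    exact Fin.succ_ne_zero _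
  · rw [edgeWord_apply_of_ne A c hv'.ne.symm (Ne.symm hvv'), edgeWord_apply_right]
    exact (Fin.succ_ne_zero _).symm
  · rw [edgeWord_apply_left, edgeWord_apply_left, Ne, Fin.succ_inj]
    exact fun h => hvv' (hA.injOn_neighborSet c u hv hv' h)

variable [∀ c, DecidableRel (G c).Adj]

variable (G A) in
def factorWords (c : C) : Finset (Fin m → Fin (g + 1)) :=
  (G c).edgeFinset.image (Sym2.lift ⟨edgeWord A c, edgeWord_comm A c⟩)

lemma mem_factorWords {c : C} {w : Fin m → Fin (g + 1)} :
    w ∈ factorWords G A c ↔ ∃ u v, (G c).Adj u v ∧ edgeWord A c u v = w := by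
  simp [factorWords, Sym2.exists]

lemma card_factorWords (hreg : ∀ c, (G c).IsRegularOfDegree g) (c : C) :
    #(factorWords G A c) = g * m / 2 := by
  have hinj : Function.Injective (Sym2.lift ⟨edgeWord A c, edgeWord_comm A c⟩) := by
    intro e e' h
    induction e using Sym2.ind
    induction e' using Sym2.ind
    exact sym2_eq_of_edgeWord_eq A c h
  have hsum := (G c).sum_degrees_eq_twice_card_edges
  simp only [(hreg c).degree_eq, sum_const, card_univ, Fintype.card_fin, smul_eq_mul] at hsum
  rw [factorWords, card_image_of_injective _ hinj, mul_comm, hsum,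
    Nat.mul_div_cancel_left _ two_pos]

lemma IsProperLabeling.disjoint_factorWords (hA : IsProperLabeling G A) {c c' : C}
    (hcc' : c ≠ c') : Disjoint (factorWords G A c) (factorWords G A c') := by
  refine disjoint_left.mpr fun w hw hw' => hcc' ?_
  obtain ⟨u, v, huv, rfl⟩ := mem_factorWords.mp hw
  obtain ⟨u', v', hu'v', h⟩ := mem_factorWords.mp hw'
  rcases Sym2.eq_iff.mp (sym2_eq_of_edgeWord_eq A c' h) with ⟨rfl, rfl⟩ | ⟨rfl, rfl⟩
  · exact hA.eq_of_edgeWord_eq huv hu'v' h.symm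
  · exact hA.eq_of_edgeWord_eq huv hu'v'.symm ((edgeWord_comm A c' _ _).symm.trans h).symm

lemma IsProperLabeling.three_le_hammingDist_of_mem_factorWords (hA : IsProperLabeling G A)
    {c : C} {w w' : Fin m → Fin (g + 1)} (hw : w ∈ factorWords G A c)
    (hw' : w' ∈ factorWords G A c) (hne : w ≠ w') : 3 ≤ hammingDist w w' := by
  obtain ⟨u, v, huv, rfl⟩ := mem_factorWords.mp hw
  obtain ⟨u', v', hu'v', rfl⟩ := mem_factorWords.mp hw'
  by_cases h1 : u = u'
  · subst h1
    exact hA.three_le_hammingDist_of_adj_of_adj huv hu'v' (by rintro rfl; exact hne rfl)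
  by_cases h2 : u = v'
  · subst h2
    rw [edgeWord_comm A c u' u] at hne ⊢
    exact hA.three_le_hammingDist_of_adj_of_adj huv hu'v'.symm (by rintro rfl; exact hne rfl)
  by_cases h3 : v = u'
  · subst h3
    rw [edgeWord_comm A c u v] at hne ⊢
    exact hA.three_le_hammingDist_of_adj_of_adj huv.symm hu'v' (by rintro rfl; exact hne rfl)
  by_cases h4 : v = v'
  · subst h4
    rw [edgeWord_comm A c u v, edgeWord_comm A c u' v] at hne ⊢
    exact hA.three_le_hammingDist_of_adj_of_adj huv.symm hu'v'.symm (by rintro rfl; exact hne rfl)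
  exact three_le_hammingDist_edgeWord_of_disjoint A c huv.ne h1 h2 h3 h4

variable [Fintype C]

lemma IsProperLabeling.exists_adj_label_eq (hA : IsProperLabeling G A)
    (hpair : ∀ u v, u ≠ v → #{c | (G c).Adj u v} = g * g) {u v : Fin m} (huv : u ≠ v)
    (a b : Fin g) : ∃ c, (G c).Adj u v ∧ A c u v = a ∧ A c v u = b := by
  have himage : ({c | (G c).Adj u v} : Finset C).image (fun c => (A c u v, A c v u)) = univ :=
    eq_univ_of_card _ <| by
      rw [card_image_of_injOn (by simpa using hA.injOn_adj u v), hpair u v huv,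
        Fintype.card_prod, Fintype.card_fin]
  obtain ⟨c, hc, hcab⟩ := mem_image.mp (himage ▸ mem_univ (a, b))
  exact ⟨c, (mem_filter.mp hc).2, congrArg Prod.fst hcab, congrArg Prod.snd hcab⟩

lemma IsProperLabeling.mem_weightTwoWords_iff (hA : IsProperLabeling G A)
    (hpair : ∀ u v, u ≠ v → #{c | (G c).Adj u v} = g * g) (w : Fin m → Fin (g + 1)) :
    w ∈ weightTwoWords m g ↔ ∃ c, w ∈ factorWords G A c := by
  simp only [weightTwoWords, mem_filter, mem_univ, true_and, mem_factorWords]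
  constructor
  · intro hw
    obtain ⟨u, v, huv, hsupp⟩ := card_eq_two.mp hw
    have hsupp' : ∀ x, w x ≠ 0 ↔ x = u ∨ x = v := fun x => by
      simpa [Fin.val_ne_zero_iff] using congrArg (x ∈ ·) hsupp
    obtain ⟨a, ha⟩ := Fin.exists_succ_eq.mpr ((hsupp' u).mpr (Or.inl rfl))
    obtain ⟨b, hb⟩ := Fin.exists_succ_eq.mpr ((hsupp' v).mpr (Or.inr rfl))
    obtain ⟨c, hc, hca, hcb⟩ := hA.exists_adj_label_eq hpair huv a b
    exact ⟨c, u, v, hc, (eq_edgeWord_of_support A c hsupp' (by rw [hca, ha])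
      (by rw [hcb, hb])).symm⟩
  · rintro ⟨c, u, v, huv, rfl⟩
    exact wordWeight_edgeWord A c huv.ne

theorem IsProperLabeling.isOF (hA : IsProperLabeling G A) (hC : Fintype.card C = g * (m - 1))
    (hreg : ∀ c, (G c).IsRegularOfDegree g)
    (hpair : ∀ u v, u ≠ v → #{c | (G c).Adj u v} = g * g) : IsOF m g := by
  let e := Fintype.equivFinOfCardEq hC
  refine ⟨fun i => factorWords G A (e.symm i), fun i j hij => hA.disjoint_factorWords
    (e.symm.injective.ne hij), ?_, fun i => card_factorWords hreg _,
    fun i w hw w' hw' => hA.three_le_hammingDist_of_mem_factorWords hw hw'⟩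
  ext w
  rw [mem_biUnion, hA.mem_weightTwoWords_iff hpair]
  exact ⟨fun ⟨i, _, hi⟩ => ⟨_, hi⟩, fun ⟨c, hc⟩ => ⟨e c, mem_univ _, by simpa using hc⟩⟩

end Factors

section Circulant

open SimpleGraph Pointwise

lemma degree_circulantGraph {G : Type*} [AddCommGroup G] [Fintype G] [DecidableEq G]
    (S : Finset G) (hS : ∀ x ∈ S, -x ∉ S) (u : G) :
    (circulantGraph (S : Set G)).degree u = 2 * #S := by
  have hdisj : Disjoint S (-S) :=
    disjoint_left.mpr fun x hx hx' => hS (-x) (mem_neg'.mp hx') (by rwa [neg_neg])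
  have hnbr : (circulantGraph (S : Set G)).neighborFinset u =
      (S ∪ -S).map (addLeftEmbedding u) := by
    ext v
    simp only [mem_neighborFinset, circulantGraph_adj, mem_coe, mem_map, mem_union, mem_neg',
      addLeftEmbedding_apply]
    constructor
    · rintro ⟨-, h | h⟩
      · exact ⟨-(u - v), Or.inr (by rwa [neg_neg]), by abel⟩
      · exact ⟨v - u, Or.inl h, by abel⟩
    · rintro ⟨x, hx, rfl⟩
      refine ⟨fun h => ?_, ?_⟩
      · have hx0 : x = 0 := by simpa using h
        subst hx0
        rcases hx with hx | hx <;> exact hS 0 (by simpa using hx) (by simpa using hx)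
      · rcases hx with hx | hx
        · exact Or.inr (by simpa using hx)
        · exact Or.inl (by simpa using hx)
  rw [← card_neighborFinset_eq_degree, hnbr, card_map, card_union_of_disjoint hdisj, card_neg,
    two_mul]

variable {M : ℕ}

def jump (a : Fin M) : Fin (2 * M + 1) := ⟨a + 1, by omega⟩

lemma jump_injective : Function.Injective (jump (M := M)) := fun a b h => by
  simpa [jump, Fin.ext_iff] using h

lemma jump_ne_zero (a : Fin M) : jump a ≠ 0 := by
  simp [jump, Fin.ext_iff]

lemma jump_ne_neg_jump (a b : Fin M) : jump a ≠ -jump b := by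
  intro h
  have := congrArg Fin.val h
  rw [Fin.val_neg, if_neg (jump_ne_zero b)] at this
  simp only [jump] at this
  omega

lemma exists_jump_eq_or_eq_neg {x : Fin (2 * M + 1)} (hx : x ≠ 0) :
    ∃ a, jump a = x ∨ jump a = -x := by
  have hneg := Fin.val_neg x
  rw [if_neg hx] at hneg
  have hx0 : x.val ≠ 0 := Fin.val_ne_zero_iff.mpr hx
  by_cases hxM : x.val ≤ M
  · exact ⟨⟨x.val - 1, by omega⟩, Or.inl (Fin.ext (show x.val - 1 + 1 = x.val by omega))⟩
  · exact ⟨⟨(-x).val - 1, by omega⟩, Or.inr (Fin.ext (show (-x).val - 1 + 1 = (-x).val by omega))⟩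

def window (h : ℕ) (m : Fin M) : Finset (Fin M) := {a | (a - m).val < h}

lemma card_window [NeZero M] {h : ℕ} (hh : h ≤ M) (m : Fin M) : #(window h m) = h := by
  refine Eq.trans ?_ (Fin.card_filter_val_lt.trans (min_eq_right hh))
  simp only [window]
  exact card_nbij' (· - m) (· + m) (by simp [Set.MapsTo]) (by simp [Set.MapsTo])
    (by simp [Set.LeftInvOn]) (by simp [Set.LeftInvOn])

lemma card_filter_mem_window [NeZero M] {h : ℕ} (hh : h ≤ M) (a : Fin M) :
    #{m | a ∈ window h m} = h := by
  simp only [window, mem_filter, mem_univ, true_and]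
  refine Eq.trans ?_ (Fin.card_filter_val_lt.trans (min_eq_right hh))
  exact card_nbij' (a - ·) (a - ·) (by simp [Set.MapsTo]) (by simp [Set.MapsTo])
    (by simp [Set.LeftInvOn]) (by simp [Set.LeftInvOn])

/-- The first coordinate of a colour only numbers the `4h` copies of each circulant graph. -/
def circulantFactor (h : ℕ) (c : Fin (4 * h) × Fin M) : SimpleGraph (Fin (2 * M + 1)) :=
  circulantGraph ((window h c.2).map ⟨jump, jump_injective⟩ : Set (Fin (2 * M + 1)))

instance (h : ℕ) (c : Fin (4 * h) × Fin M) : DecidableRel (circulantFactor h c).Adj :=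
  inferInstanceAs (DecidableRel (circulantGraph _).Adj)

lemma circulantFactor_isRegularOfDegree [NeZero M] {h : ℕ} (hh : h ≤ M) (c : Fin (4 * h) × Fin M) :
    (circulantFactor h c).IsRegularOfDegree (2 * h) := by
  intro u
  rw [show (circulantFactor h c).degree u = _ from degree_circulantGraph _ ?_ u, card_map,
    card_window hh]
  simp only [mem_map, Function.Embedding.coeFn_mk, not_exists, not_and]
  rintro _ ⟨a, -, rfl⟩ b - h
  exact jump_ne_neg_jump b a h

lemma circulantFactor_adj_iff {h : ℕ} {c : Fin (4 * h) × Fin M} {u v : Fin (2 * M + 1)}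
    {a : Fin M} (ha : jump a = v - u ∨ jump a = u - v) :
    (circulantFactor h c).Adj u v ↔ a ∈ window h c.2 := by
  wlog hvu : jump a = v - u generalizing u v
  · rw [SimpleGraph.adj_comm]
    exact this ha.symm (ha.resolve_left hvu)
  have huv : u - v = -jump a := by rw [hvu, neg_sub]
  simp only [circulantFactor, circulantGraph_adj, coe_map, Function.Embedding.coeFn_mk,
    Set.mem_image, mem_coe]
  constructor
  · rintro ⟨-, ⟨b, -, hb⟩ | ⟨b, hb, hba⟩⟩
    · exact absurd (hb.trans huv) (jump_ne_neg_jump b a)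
    · rwa [jump_injective (hba.trans hvu.symm)] at hb
  · intro ha'
    refine ⟨fun h => jump_ne_zero a ?_, Or.inr ⟨a, ha', hvu⟩⟩
    rw [hvu, h, sub_self]

lemma card_circulantFactor_adj [NeZero M] {h : ℕ} (hh : h ≤ M) {u v : Fin (2 * M + 1)}
    (huv : u ≠ v) :
    #{c | (circulantFactor h c).Adj u v} = 2 * h * (2 * h) := by
  obtain ⟨a, ha⟩ := exists_jump_eq_or_eq_neg (sub_ne_zero.mpr huv.symm)
  rw [neg_sub] at ha
  have : ({c | (circulantFactor h c).Adj u v} : Finset (Fin (4 * h) × Fin M)) =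
      univ ×ˢ ({m | a ∈ window h m} : Finset (Fin M)) := by
    ext c
    simp [circulantFactor_adj_iff ha]
  rw [this, card_product, card_univ, Fintype.card_fin, card_filter_mem_window hh]
  ring

end Circulant

theorem isOF_of_isRegularOfDegree {m g : ℕ} [NeZero g] {C : Type*} [Fintype C] [DecidableEq C]
    (G : C → SimpleGraph (Fin m)) [∀ c, DecidableRel (G c).Adj]
    (hC : Fintype.card C = g * (m - 1)) (hreg : ∀ c, (G c).IsRegularOfDegree g)
    (hpair : ∀ u v, u ≠ v → #{c | (G c).Adj u v} = g * g) : IsOF m g := by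
  obtain ⟨A, hA⟩ := exists_isProperLabeling hreg hpair
  exact hA.isOF hC hreg hpair

theorem isOF_two_mul_add_one {M h : ℕ} (hh : 0 < h) (hhM : h ≤ M) : IsOF (2 * M + 1) (2 * h) :=
  haveI : NeZero M := ⟨by omega⟩
  haveI : NeZero (2 * h) := ⟨by omega⟩
  isOF_of_isRegularOfDegree (circulantFactor h)
    (by rw [Fintype.card_prod, Fintype.card_fin, Fintype.card_fin, Nat.add_sub_cancel]; ring)
    (circulantFactor_isRegularOfDegree hhM) fun _ _ => card_circulantFactor_adj hhM

/-- For every even `g ≥ 2` and every odd `n ≥ max(2g-1, g+3)`, an `OF(n,g)`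
exists. -/
theorem exists_OF_odd_n (n g : ℕ) (hg2 : 2 ≤ g) (hge : Even g) (hno : Odd n)
    (hn : max (2 * g - 1) (g + 3) ≤ n) : IsOF n g := by
  obtain ⟨h, rfl⟩ := hge.two_dvd
  obtain ⟨M, rfl⟩ := hno
  exact isOF_two_mul_add_one (by omega) (by omega)
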